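/- (Redundance-based strengthening rule.) Let (𝒞, 𝒟, g, z, T, ε) be an (F, f)-valid configuration and let C ⊆ ℝ^n. Suppose there exists a witness ω : ℝ^n → ℝ^n such that for all x ∈ ℝ^n: if x ∈ ⋂(𝒞 ∪ 𝒟) and x ∉ C, then ω(x) ∈ ⋂(𝒞 ∪ 𝒟 ∪ {C}), ω(x) ⪰_T x, and g(ω(x)) ≤ g(x). Then (𝒞, 𝒟 ∪ {C}, g, z, T, ε) is also (F, f)-valid. -/

import Mathlib

/-!
Only (V4) changes. Given `x`, validity of the old configuration gives `y ∈ ⋂(𝒞 ∪ 𝒟)` with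
`y ⪰_T x` and `g y ≤ g x`; if `y ∉ C` we pass to `ω y`, so everything rests on the
transitivity of `⪰_T` on `⋂𝒞`. For that, note that if `v = dcn(p, q)` and `σ_v(p) ⪰_ε σ_v(q)`,
then `σ_u(p) ⪰_ε σ_u(q)` at every node `u` whose region contains `p` or `q`: such a `u` is
comparable with `v` (regions containing a common point form a chain, by (T7)); above `v` we
truncate `σ_v` (T5), and below `v` the points cannot agree on `σ_v` (by (T3) and (T7) they
would share a child of `v`, contradicting maximality of `v`), so the strict order extends to
`σ_u`. Applied at `u = dcn(a, c)` to both `a ⪰_T b` and `b ⪰_T c`, this reduces transitivity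
to that of `⪰_ε` on lists.
-/

open Set

/-- Apply a signed index list (index, sign) to a point, giving the vector
`(sign(i₁)·x_{|i₁|}, …, sign(i_k)·x_{|i_k|})` as a list of reals.
`true` encodes a positive sign, `false` a negative sign. -/
def sigApply {n : ℕ} (σ : List (Fin n × Bool)) (x : Fin n → ℝ) : List ℝ :=
  σ.map (fun p => if p.2 then x p.1 else -(x p.1))

/-- Strict ε-lexicographic order `x ≻_ε y` on lists of reals:
`x ≠ y` and, at the first index where they differ, `x i ≥ y i + ε`. -/
def lexGt (ε : ℝ) : List ℝ → List ℝ → Prop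
  | a :: as, b :: bs => (a = b ∧ lexGt ε as bs) ∨ (a ≠ b ∧ b + ε ≤ a)
  | _, _ => False

/-- A branching tree `T = (V, E, B, σ)`: a finite arborescence (encoded by a
parent map from which every node reaches the root), a branching constraint
`B v ⊆ ℝⁿ` for every node with `B r = ℝⁿ`, and a list `σ v` of signed variable
indices with pairwise distinct absolute values for every node. -/
structure BranchingTree (n : ℕ) where
  V : Type
  fin : Fintype V
  root : V
  parent : V → Option V
  parent_root : parent root = none
  parent_isSome : ∀ v, v ≠ root → (parent v).isSome
  reach_root : ∀ v, Relation.ReflTransGen (fun a b => parent a = some b) v root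
  B : V → Set (Fin n → ℝ)
  B_root : B root = Set.univ
  sig : V → List (Fin n × Bool)
  sig_nodup : ∀ v, ((sig v).map Prod.fst).Nodup

namespace BranchingTree

variable {n : ℕ} (T : BranchingTree n)

/-- The set of children `δ⁺(u)` of a node. -/
def children (u : T.V) : Set T.V := {v | T.parent v = some u}

/-- A leaf is a node without children. -/
def IsLeaf (v : T.V) : Prop := T.children v = ∅

/-- The nodes on the root-to-`v` path (the ancestors of `v`, including `v`). -/
def pathNodes (v : T.V) : Set T.V :=
  {u | Relation.ReflTransGen (fun a b => T.parent a = some b) v u}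

/-- `ℬ_v`: the branching constraints attached to the nodes on the root-to-`v` path. -/
def pathCons (v : T.V) : Set (Set (Fin n → ℝ)) := T.B '' T.pathNodes v

/-- Depth of a node: the number of nodes on its root path. -/
noncomputable def depth (v : T.V) : ℕ := (T.pathNodes v).ncard

/-- The feasible region `⋂(𝒞 ∪ ℬ_v)` of node `v`. -/
def region (𝒞 : Set (Set (Fin n → ℝ))) (v : T.V) : Set (Fin n → ℝ) :=
  ⋂₀ (𝒞 ∪ T.pathCons v)

/-- `T` is `𝒞`-consistent: (T3) the children of any non-leaf cover `⋂𝒞`;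
(T5) `σ u` is a prefix of `σ v` for every child `v` of `u`;
(T6) every entry of `σ v (x)` is bounded above over `x ∈ ⋂𝒞`;
(T7) distinct children of `u` have `σ u`-disjoint branching constraints. -/
def Consistent (𝒞 : Set (Set (Fin n → ℝ))) : Prop :=
  (∀ u : T.V, (T.children u).Nonempty → ⋂₀ 𝒞 ⊆ ⋃ v ∈ T.children u, T.B v) ∧
  (∀ u v : T.V, v ∈ T.children u → T.sig u <+: T.sig v) ∧
  (∀ v : T.V, ∀ i : Fin (T.sig v).length,
    BddAbove ((fun x => if ((T.sig v).get i).2 then x ((T.sig v).get i).1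
      else -(x ((T.sig v).get i).1)) '' ⋂₀ 𝒞)) ∧
  (∀ u v w : T.V, v ∈ T.children u → w ∈ T.children u → v ≠ w →
    sigApply (T.sig u) '' T.B v ∩ sigApply (T.sig u) '' T.B w = ∅)

/-- `v` is a deepest common node `dcn(x,y)`: both `x` and `y` lie in the
feasible region of `v`, and `v` is deepest with this property. -/
def IsDCN (𝒞 : Set (Set (Fin n → ℝ))) (v : T.V) (x y : Fin n → ℝ) : Prop :=
  x ∈ T.region 𝒞 v ∧ y ∈ T.region 𝒞 v ∧
  ∀ w : T.V, x ∈ T.region 𝒞 w → y ∈ T.region 𝒞 w → T.depth w ≤ T.depth v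

/-- `x ⪰_T y` : with `v = dcn(x,y)`, `σ v (x) = σ v (y)` or `σ v (x) ≻_ε σ v (y)`. -/
def TreeGe (𝒞 : Set (Set (Fin n → ℝ))) (ε : ℝ) (x y : Fin n → ℝ) : Prop :=
  ∃ v : T.V, T.IsDCN 𝒞 v x y ∧
    (sigApply (T.sig v) x = sigApply (T.sig v) y ∨
      lexGt ε (sigApply (T.sig v) x) (sigApply (T.sig v) y))

/-- `x ≻_{ε,T} y` : with `v = dcn(x,y)`, `σ v (x) ≻_ε σ v (y)`. -/
def TreeGt (𝒞 : Set (Set (Fin n → ℝ))) (ε : ℝ) (x y : Fin n → ℝ) : Prop :=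
  ∃ v : T.V, T.IsDCN 𝒞 v x y ∧
    lexGt ε (sigApply (T.sig v) x) (sigApply (T.sig v) y)

end BranchingTree

/-- A configuration `(𝒞, 𝒟, g, z, T, ε)`. -/
structure Config (n : ℕ) where
  core : Set (Set (Fin n → ℝ))
  derived : Set (Set (Fin n → ℝ))
  g : (Fin n → ℝ) → ℝ
  z : WithTop ℝ
  tree : BranchingTree n
  eps : ℝ

/-- `(F, f)`-validity of a configuration: (V1) the tree is core-consistent and
`ε > 0`; (V2) if `z < ∞` there is `x ∈ F` with `f x ≤ z`; (V3) for every real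
`ẑ < z`, `F` contains a point of `f`-value `≤ ẑ` iff `⋂𝒞` contains a point of
`g`-value `≤ ẑ`; (V4) every `x ∈ ⋂𝒞` with `g x < z` is dominated by some
`y ∈ ⋂(𝒞 ∪ 𝒟)` with `y ⪰_T x` and `g y ≤ g x`. -/
def Config.Valid {n : ℕ} (F : Set (Fin n → ℝ)) (f : (Fin n → ℝ) → ℝ)
    (K : Config n) : Prop :=
  (K.tree.Consistent K.core ∧ 0 < K.eps) ∧
  (K.z < ⊤ → ∃ x ∈ F, (f x : WithTop ℝ) ≤ K.z) ∧
  (∀ zh : ℝ, (zh : WithTop ℝ) < K.z →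
    ((∃ x ∈ F, f x ≤ zh) ↔ ∃ x ∈ ⋂₀ K.core, K.g x ≤ zh)) ∧
  (∀ x ∈ ⋂₀ K.core, (K.g x : WithTop ℝ) < K.z →
    ∃ y ∈ ⋂₀ (K.core ∪ K.derived), K.tree.TreeGe K.core K.eps y x ∧ K.g y ≤ K.g x)

/-- The implication constraint `[𝒜 ⇝ C] = (ℝⁿ \ ⋂𝒜) ∪ C`. -/
def implCon {n : ℕ} (𝒜 : Set (Set (Fin n → ℝ))) (C : Set (Fin n → ℝ)) :
    Set (Fin n → ℝ) := (⋂₀ 𝒜)ᶜ ∪ C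

def lexGe (ε : ℝ) (l l' : List ℝ) : Prop := l = l' ∨ lexGt ε l l'

section Lex

variable {ε : ℝ}

theorem not_lexGt_nil_left (l : List ℝ) : ¬ lexGt ε [] l := by cases l <;> simp [lexGt]

theorem not_lexGt_nil_right (l : List ℝ) : ¬ lexGt ε l [] := by cases l <;> simp [lexGt]

theorem lexGt_trans (hε : 0 ≤ ε) :
    ∀ {a b c : List ℝ}, lexGt ε a b → lexGt ε b c → lexGt ε a c
  | [], _, _, hab, _ => absurd hab (not_lexGt_nil_left _)
  | _ :: _, [], _, hab, _ => absurd hab (not_lexGt_nil_right _)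
  | _ :: _, _ :: _, [], _, hbc => absurd hbc (not_lexGt_nil_right _)
  | x :: _, y :: _, z :: _, hab, hbc => by
      rcases hab with ⟨rfl, hab⟩ | ⟨hxy, hxy'⟩ <;> rcases hbc with ⟨rfl, hbc⟩ | ⟨hyz, hyz'⟩
      · exact Or.inl ⟨rfl, lexGt_trans hε hab hbc⟩
      · exact Or.inr ⟨hyz, hyz'⟩
      · exact Or.inr ⟨hxy, hxy'⟩
      · have : y < x := lt_of_le_of_ne (by linarith) (Ne.symm hxy)
        exact Or.inr ⟨(by linarith : z < x).ne', by linarith⟩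

theorem lexGe_trans (hε : 0 ≤ ε) {a b c : List ℝ} (hab : lexGe ε a b) (hbc : lexGe ε b c) :
    lexGe ε a c := by
  rcases hab with rfl | hab
  · exact hbc
  rcases hbc with rfl | hbc
  · exact Or.inr hab
  · exact Or.inr (lexGt_trans hε hab hbc)

theorem lexGt_append : ∀ {a b : List ℝ} (s t : List ℝ), lexGt ε a b → lexGt ε (a ++ s) (b ++ t)
  | [], _, _, _, h => absurd h (not_lexGt_nil_left _)
  | _ :: _, [], _, _, h => absurd h (not_lexGt_nil_right _)
  | _ :: _, _ :: _, s, t, h => by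
      rcases h with ⟨rfl, h⟩ | h
      · exact Or.inl ⟨rfl, lexGt_append s t h⟩
      · exact Or.inr h

theorem lexGe_of_lexGt_append :
    ∀ {a b s t : List ℝ}, a.length = b.length → lexGt ε (a ++ s) (b ++ t) → lexGe ε a b
  | [], [], _, _, _, _ => Or.inl rfl
  | [], _ :: _, _, _, hlen, _ => absurd hlen (by simp)
  | _ :: _, [], _, _, hlen, _ => absurd hlen (by simp)
  | _ :: _, _ :: _, _, _, hlen, h => by
      rcases h with ⟨rfl, h⟩ | h
      · rcases lexGe_of_lexGt_append (Nat.succ.inj hlen) h with rfl | h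
        · exact Or.inl rfl
        · exact Or.inr (Or.inl ⟨rfl, h⟩)
      · exact Or.inr (Or.inr h)

theorem lexGe_of_lexGe_append {a b s t : List ℝ} (hlen : a.length = b.length)
    (h : lexGe ε (a ++ s) (b ++ t)) : lexGe ε a b := by
  rcases h with h | h
  · exact Or.inl (List.append_inj_left h hlen)
  · exact lexGe_of_lexGt_append hlen h

variable {n : ℕ} {σ τ : List (Fin n × Bool)} {x y : Fin n → ℝ}

theorem sigApply_append (σ τ : List (Fin n × Bool)) (x : Fin n → ℝ) :
    sigApply (σ ++ τ) x = sigApply σ x ++ sigApply τ x :=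
  List.map_append

theorem lexGe_sigApply_of_isPrefix (h : σ <+: τ)
    (hge : lexGe ε (sigApply τ x) (sigApply τ y)) : lexGe ε (sigApply σ x) (sigApply σ y) := by
  obtain ⟨ρ, rfl⟩ := h
  rw [sigApply_append, sigApply_append] at hge
  exact lexGe_of_lexGe_append (by simp [sigApply]) hge

theorem lexGt_sigApply_of_isPrefix (h : σ <+: τ)
    (hgt : lexGt ε (sigApply σ x) (sigApply σ y)) : lexGt ε (sigApply τ x) (sigApply τ y) := by
  obtain ⟨ρ, rfl⟩ := h
  rw [sigApply_append, sigApply_append]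
  exact lexGt_append _ _ hgt

end Lex

namespace BranchingTree

variable {n : ℕ} (T : BranchingTree n) {𝒞 : Set (Set (Fin n → ℝ))}

theorem not_transGen_parent_self (a : T.V) :
    ¬ Relation.TransGen (fun u v => T.parent u = some v) a a := by
  induction T.reach_root a using Relation.ReflTransGen.head_induction_on with
  | refl =>
      intro hcyc
      obtain ⟨b, hb, -⟩ := Relation.TransGen.head'_iff.mp hcyc
      simp [T.parent_root] at hb
  | @head a c hac _ ih =>
      intro hcyc
      obtain ⟨b, hab, hba⟩ := Relation.TransGen.head'_iff.mp hcyc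
      obtain rfl : c = b := Option.some.inj (hac.symm.trans hab)
      exact ih (Relation.TransGen.tail' hba hac)

theorem pathNodes_of_parent_eq {v' v : T.V} (h : T.parent v' = some v) :
    T.pathNodes v' = insert v' (T.pathNodes v) := by
  ext u
  constructor
  · intro hu
    rcases Relation.ReflTransGen.cases_head hu with rfl | ⟨c, hc, hcu⟩
    · exact Or.inl rfl
    · obtain rfl : v = c := Option.some.inj (h.symm.trans hc)
      exact Or.inr hcu
  · rintro (rfl | hu)
    · exact Relation.ReflTransGen.refl
    · exact Relation.ReflTransGen.head h hu

theorem depth_lt_of_parent_eq {v' v : T.V} (h : T.parent v' = some v) :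
    T.depth v < T.depth v' := by
  have := T.fin
  rw [depth, depth, T.pathNodes_of_parent_eq h]
  exact Set.ncard_lt_ncard (Set.ssubset_insert fun hv' =>
    T.not_transGen_parent_self v' (Relation.TransGen.head' h hv')) (Set.toFinite _)

theorem mem_region_of_parent_eq {v' v : T.V} (h : T.parent v' = some v) {x : Fin n → ℝ} :
    x ∈ T.region 𝒞 v' ↔ x ∈ T.region 𝒞 v ∧ x ∈ T.B v' := by
  simp only [region, pathCons, T.pathNodes_of_parent_eq h, Set.image_insert_eq,
    Set.union_insert, Set.sInter_insert, Set.mem_inter_iff]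
  exact and_comm

theorem mem_sInter_of_mem_region {v : T.V} {x : Fin n → ℝ} (h : x ∈ T.region 𝒞 v) :
    x ∈ ⋂₀ 𝒞 :=
  Set.sInter_subset_sInter Set.subset_union_left h

theorem mem_B_of_mem_region {v u : T.V} {x : Fin n → ℝ} (h : x ∈ T.region 𝒞 v)
    (hu : u ∈ T.pathNodes v) : x ∈ T.B u :=
  Set.mem_sInter.mp h _ (Or.inr ⟨u, hu, rfl⟩)

theorem mem_region_root {x : Fin n → ℝ} (hx : x ∈ ⋂₀ 𝒞) : x ∈ T.region 𝒞 T.root := by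
  rintro s (hs | ⟨u, hu, rfl⟩)
  · exact hx s hs
  · rcases Relation.ReflTransGen.cases_head hu with rfl | ⟨c, hc, -⟩
    · simp [T.B_root]
    · simp [T.parent_root] at hc

theorem sig_isPrefix_of_mem_pathNodes (hcons : T.Consistent 𝒞) {u v : T.V}
    (h : u ∈ T.pathNodes v) : T.sig u <+: T.sig v := by
  induction h using Relation.ReflTransGen.head_induction_on with
  | refl => exact List.prefix_refl _
  | head hstep _ ih => exact ih.trans (hcons.2.1 _ _ hstep)

theorem eq_of_sigApply_eq (hcons : T.Consistent 𝒞) {p a b : T.V} (ha : a ∈ T.children p)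
    (hb : b ∈ T.children p) {x y : Fin n → ℝ} (hx : x ∈ T.B a) (hy : y ∈ T.B b)
    (hxy : sigApply (T.sig p) x = sigApply (T.sig p) y) : a = b := by
  by_contra hab
  have hdisj := hcons.2.2.2 p a b ha hb hab
  exact Set.eq_empty_iff_forall_notMem.mp hdisj _ ⟨⟨x, hx, rfl⟩, y, hy, hxy.symm⟩

theorem mem_pathNodes_or_mem_pathNodes (hcons : T.Consistent 𝒞) {u w : T.V}
    {x : Fin n → ℝ} (hxu : x ∈ T.region 𝒞 u) (hxw : x ∈ T.region 𝒞 w) :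
    u ∈ T.pathNodes w ∨ w ∈ T.pathNodes u := by
  have := T.fin
  by_contra! ⟨hu, hw⟩
  obtain ⟨p, ⟨hpu, hpw⟩, hpmax⟩ := Set.exists_max_image (T.pathNodes u ∩ T.pathNodes w)
    T.depth (Set.toFinite _) ⟨T.root, T.reach_root u, T.reach_root w⟩
  -- the children of the deepest common ancestor `p` towards `u` and towards `w` both contain `x`
  obtain ⟨a, hua, hap⟩ :=
    (Relation.ReflTransGen.cases_tail hpu).resolve_left fun h => hu (h ▸ hpw)
  obtain ⟨b, hwb, hbp⟩ :=
    (Relation.ReflTransGen.cases_tail hpw).resolve_left fun h => hw (h ▸ hpu)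
  obtain rfl : a = b := T.eq_of_sigApply_eq hcons hap hbp (T.mem_B_of_mem_region hxu hua)
    (T.mem_B_of_mem_region hxw hwb) rfl
  exact (T.depth_lt_of_parent_eq hap).not_ge (hpmax a ⟨hua, hwb⟩)

theorem exists_isDCN {x y : Fin n → ℝ} (hx : x ∈ ⋂₀ 𝒞) (hy : y ∈ ⋂₀ 𝒞) :
    ∃ v, T.IsDCN 𝒞 v x y := by
  have := T.fin
  obtain ⟨v, ⟨hxv, hyv⟩, hmax⟩ := Set.exists_max_image
    {v | x ∈ T.region 𝒞 v ∧ y ∈ T.region 𝒞 v} T.depth (Set.toFinite _)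
    ⟨T.root, T.mem_region_root hx, T.mem_region_root hy⟩
  exact ⟨v, hxv, hyv, fun w hxw hyw => hmax w ⟨hxw, hyw⟩⟩

variable {T} {ε : ℝ} {v u : T.V} {p q : Fin n → ℝ}

theorem IsDCN.symm (h : T.IsDCN 𝒞 v p q) : T.IsDCN 𝒞 v q p :=
  ⟨h.2.1, h.1, fun w hq hp => h.2.2 w hp hq⟩

theorem IsDCN.sigApply_ne (hcons : T.Consistent 𝒞) (hdcn : T.IsDCN 𝒞 v p q)
    (hvu : v ∈ T.pathNodes u) (hne : u ≠ v) (hpu : p ∈ T.region 𝒞 u) :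
    sigApply (T.sig v) p ≠ sigApply (T.sig v) q := by
  intro hpq
  obtain ⟨a, hua, hav⟩ := (Relation.ReflTransGen.cases_tail hvu).resolve_left hne.symm
  have hpa : p ∈ T.B a := T.mem_B_of_mem_region hpu hua
  obtain ⟨b, hbv, hqb⟩ :=
    mem_iUnion₂.mp (hcons.1 v ⟨a, hav⟩ (T.mem_sInter_of_mem_region hdcn.2.1))
  obtain rfl : b = a := T.eq_of_sigApply_eq hcons hbv hav hqb hpa hpq.symm
  have hdepth := hdcn.2.2 b ((T.mem_region_of_parent_eq hav).2 ⟨hdcn.1, hpa⟩)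
    ((T.mem_region_of_parent_eq hav).2 ⟨hdcn.2.1, hqb⟩)
  exact (T.depth_lt_of_parent_eq hav).not_ge hdepth

theorem IsDCN.lexGe_sigApply (hcons : T.Consistent 𝒞) (hdcn : T.IsDCN 𝒞 v p q)
    (hge : lexGe ε (sigApply (T.sig v) p) (sigApply (T.sig v) q))
    (hu : p ∈ T.region 𝒞 u ∨ q ∈ T.region 𝒞 u) :
    lexGe ε (sigApply (T.sig u) p) (sigApply (T.sig u) q) := by
  have hcomp : u ∈ T.pathNodes v ∨ v ∈ T.pathNodes u := by
    rcases hu with hpu | hqu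
    · exact T.mem_pathNodes_or_mem_pathNodes hcons hpu hdcn.1
    · exact T.mem_pathNodes_or_mem_pathNodes hcons hqu hdcn.2.1
  rcases hcomp with huv | hvu
  · exact lexGe_sigApply_of_isPrefix (T.sig_isPrefix_of_mem_pathNodes hcons huv) hge
  rcases eq_or_ne u v with rfl | hne
  · exact hge
  have hpq : sigApply (T.sig v) p ≠ sigApply (T.sig v) q := by
    rcases hu with hpu | hqu
    · exact hdcn.sigApply_ne hcons hvu hne hpu
    · exact (hdcn.symm.sigApply_ne hcons hvu hne hqu).symm
  exact Or.inr (lexGt_sigApply_of_isPrefix (T.sig_isPrefix_of_mem_pathNodes hcons hvu)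
    (hge.resolve_left hpq))

theorem TreeGe.trans (hcons : T.Consistent 𝒞) (hε : 0 ≤ ε) {a b c : Fin n → ℝ}
    (ha : a ∈ ⋂₀ 𝒞) (hc : c ∈ ⋂₀ 𝒞) (hab : T.TreeGe 𝒞 ε a b) (hbc : T.TreeGe 𝒞 ε b c) :
    T.TreeGe 𝒞 ε a c := by
  obtain ⟨v, hv, hab⟩ := hab
  obtain ⟨w, hw, hbc⟩ := hbc
  obtain ⟨u, hu⟩ := T.exists_isDCN ha hc
  exact ⟨u, hu, lexGe_trans hε (hv.lexGe_sigApply hcons hab (Or.inl hu.1))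
    (hw.lexGe_sigApply hcons hbc (Or.inr hu.2.1))⟩

end BranchingTree

/-- redundance-based strengthening rule: if
`(𝒞, 𝒟, g, z, T, ε)` is `(F, f)`-valid and there is a witness `ω : ℝⁿ → ℝⁿ`
such that every `x ∈ ⋂(𝒞 ∪ 𝒟)` with `x ∉ C` satisfies
`ω x ∈ ⋂(𝒞 ∪ 𝒟 ∪ {C})`, `ω x ⪰_T x`, and `g (ω x) ≤ g x`, then
`(𝒞, 𝒟 ∪ {C}, g, z, T, ε)` is also `(F, f)`-valid. -/
theorem redundance_strengthening {n : ℕ} (F : Set (Fin n → ℝ))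
    (f : (Fin n → ℝ) → ℝ) (K : Config n) (hV : K.Valid F f)
    (C : Set (Fin n → ℝ)) (ω : (Fin n → ℝ) → (Fin n → ℝ))
    (hω : ∀ x : Fin n → ℝ, x ∈ ⋂₀ (K.core ∪ K.derived) → x ∉ C →
      ω x ∈ ⋂₀ (K.core ∪ K.derived ∪ {C}) ∧
      K.tree.TreeGe K.core K.eps (ω x) x ∧ K.g (ω x) ≤ K.g x) :
    Config.Valid F f
      { core := K.core, derived := insert C K.derived, g := K.g, z := K.z,
        tree := K.tree, eps := K.eps } := by
  obtain ⟨⟨hcons, hε⟩, hz, hopt, hdom⟩ := hV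
  refine ⟨⟨hcons, hε⟩, hz, hopt, fun x hx hgx => ?_⟩
  obtain ⟨y, hy, hyx, hgy⟩ := hdom x hx hgx
  show ∃ y ∈ ⋂₀ (K.core ∪ insert C K.derived), _
  rw [Set.union_insert, Set.sInter_insert]
  by_cases hyC : y ∈ C
  · exact ⟨y, ⟨hyC, hy⟩, hyx, hgy⟩
  obtain ⟨hωy, hωyy, hgωy⟩ := hω y hy hyC
  rw [Set.union_singleton, Set.sInter_insert] at hωy
  have hωy_core : ω y ∈ ⋂₀ K.core := Set.sInter_subset_sInter Set.subset_union_left hωy.2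
  exact ⟨ω y, hωy, hωyy.trans hcons hε.le hωy_core hx hyx, hgωy.trans hgy⟩
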